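/- arXiv:2412.00222 — 2 statements merged into one kernel-verified Lean document; each statement's English description precedes it below -/
import Mathlib

section
/- Let α be a finite type with decidable equality, let n : ℕ, let x, y : Fin n → α with E(x) ≠ E(y), and let i : Fin n be the least index with E(x) i ≠ E(y) i. Suppose there exists d : Fin n such that x and y p-match after discarding {d}. Then d = i, or prev_x(i) exists and d = prev_x(i), or prev_y(i) exists and d = prev_y(i). -/
/-- The predecessor occurrence of position `i` in `x`: the largest `j < i`
with `x j = x i`, as an element of `WithBot (Fin n)` (`⊥` when none exists). -/
def prevOcc {α : Type*} [DecidableEq α] {n : ℕ} (x : Fin n → α) (i : Fin n) :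
    WithBot (Fin n) :=
  (Finset.univ.filter (fun j : Fin n => j < i ∧ x j = x i)).max

/-- Baker's encoding of a parameterized string. -/
def encode {α : Type*} [DecidableEq α] {n : ℕ} (x : Fin n → α) (i : Fin n) : ℕ :=
  match prevOcc x i with
  | none => 0
  | some j => (i : ℕ) - (j : ℕ)

/-! If neither `prevOcc x i` nor `prevOcc y i` is `d`, then the two predecessor sets, which agree
away from `d` because `π` is injective, have the same maximum; hence `encode x i = encode y i`. -/

namespace Finset

variable {β : Type*} [LinearOrder β] {s t : Finset β} {a : β}

theorem max_erase_of_max_ne (h : s.max ≠ a) : (s.erase a).max = s.max := by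
  by_cases ha : a ∈ s
  · have hs : s.max = max (a : WithBot β) (s.erase a).max := by
      rw [← max_insert, insert_erase ha]
    rw [hs] at h ⊢
    exact ((max_choice _ _).resolve_left h).symm
  · rw [erase_eq_of_notMem ha]

theorem max_eq_of_erase_eq (hst : s.erase a = t.erase a) (hs : s.max ≠ a) (ht : t.max ≠ a) :
    s.max = t.max := by
  rw [← max_erase_of_max_ne hs, ← max_erase_of_max_ne ht, hst]

end Finset

section

variable {α : Type*} [DecidableEq α] {n : ℕ} {x y : Fin n → α} {i d : Fin n}

theorem prevOcc_eq_of_perm_apply_eq {π : Equiv.Perm α} (hπ : ∀ j, j ≠ d → π (x j) = y j)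
    (hi : i ≠ d) (hx : prevOcc x i ≠ d) (hy : prevOcc y i ≠ d) : prevOcc x i = prevOcc y i := by
  refine Finset.max_eq_of_erase_eq ?_ hx hy
  ext j
  simp only [Finset.mem_erase, Finset.mem_filter, Finset.mem_univ, true_and]
  refine and_congr_right fun hj => and_congr_right fun _ => ?_
  rw [← π.injective.eq_iff, hπ j hj, hπ i hi]

theorem encode_eq_of_prevOcc_eq (h : prevOcc x i = prevOcc y i) : encode x i = encode y i := by
  rw [encode, encode, h]

end

theorem single_discard_mem_of_first_mismatch_general {α : Type*} [DecidableEq α]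
    (n : ℕ) (x y : Fin n → α) (i : Fin n)
    (hi : encode x i ≠ encode y i)
    (d : Fin n) (hd : ∃ π : Equiv.Perm α, ∀ j ∉ ({d} : Finset (Fin n)), π (x j) = y j) :
    d = i ∨ prevOcc x i = (d : WithBot (Fin n)) ∨ prevOcc y i = (d : WithBot (Fin n)) := by
  obtain ⟨π, hπ⟩ := hd
  by_contra! h
  obtain ⟨hdi, hx, hy⟩ := h
  exact hi <| encode_eq_of_prevOcc_eq <| prevOcc_eq_of_perm_apply_eq
    (fun j hj => hπ j (Finset.notMem_singleton.mpr hj)) hdi.symm hx hy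

theorem single_discard_mem_of_first_mismatch {α : Type*} [Fintype α] [DecidableEq α]
    (n : ℕ) (x y : Fin n → α) (hne : encode x ≠ encode y) (i : Fin n)
    (hi : encode x i ≠ encode y i) (hleast : ∀ j : Fin n, j < i → encode x j = encode y j)
    (d : Fin n) (hd : ∃ π : Equiv.Perm α, ∀ j ∉ ({d} : Finset (Fin n)), π (x j) = y j) :
    d = i ∨ prevOcc x i = (d : WithBot (Fin n)) ∨ prevOcc y i = (d : WithBot (Fin n)) :=
  single_discard_mem_of_first_mismatch_general n x y i hi d hd
end

section
/- Let α be a finite type with decidable equality, let n : ℕ, let x, y : Fin n → α with E(x) ≠ E(y), and let i : Fin n be the least index with E(x) i ≠ E(y) i. Suppose that both prev_x(i) and prev_y(i) exist. Then x and y p-match with tolerance 1 if and only if x and y p-match after discarding {i}. -/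
/-!
Write `z = π ∘ x`; relabelling does not change the encoding, so `z` and `y` have the same
encoding below `i` and different encodings at `i`, and they agree outside a single position `d`.
If `d > i`, the prefixes up to `i` coincide and so would the encodings at `i`. If `d < i`, the
sets of earlier occurrences of the symbol at `i` in `z` and in `y` differ exactly by `d`, say
`d` is one for `z` but not for `y`. As the predecessors at `i` differ, `d` is the predecessor
in `z` and the predecessor `p` in `y` lies before `d`; then `z p = z d`, so `d` has a predecessor
`q` in `z`, which is also its predecessor in `y`, and `z d = z q = y q = y d`, contradicting
`y d ≠ y i = z i = z d`. Hence the only position where `z` and `y` may differ is `i`.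
-/

section PrevOcc

variable {α β : Type*} [DecidableEq α] [DecidableEq β] {n : ℕ} {x : Fin n → α} {y : Fin n → β}
  {i j : Fin n}

lemma prevOcc_congr (h : ∀ k < i, x k = x i ↔ y k = y i) : prevOcc x i = prevOcc y i := by
  unfold prevOcc
  congr 1
  exact Finset.filter_congr fun k _ => and_congr_right (h k)

lemma prevOcc_comp_of_injective {f : α → β} (hf : Function.Injective f) (x : Fin n → α)
    (i : Fin n) : prevOcc (f ∘ x) i = prevOcc x i :=
  prevOcc_congr fun _ _ => hf.eq_iff

lemma lt_and_eq_of_prevOcc_eq_coe (h : prevOcc x i = j) : j < i ∧ x j = x i := by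
  simpa using Finset.mem_of_max h

lemma coe_le_prevOcc (hj : j < i) (hx : x j = x i) : (j : WithBot (Fin n)) ≤ prevOcc x i :=
  Finset.le_max (by simp [hj, hx])

lemma prevOcc_eq_coe_iff :
    prevOcc x i = j ↔ j < i ∧ x j = x i ∧ ∀ k, j < k → k < i → x k ≠ x i := by
  refine ⟨fun h => ⟨(lt_and_eq_of_prevOcc_eq_coe h).1, (lt_and_eq_of_prevOcc_eq_coe h).2,
    fun k hjk hki hk => ?_⟩, fun ⟨hji, hx, hmax⟩ => le_antisymm ?_ (coe_le_prevOcc hji hx)⟩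
  · exact absurd hjk (not_lt.2 (WithBot.coe_le_coe.1 (h ▸ coe_le_prevOcc hki hk)))
  · refine Finset.max_le fun k hk => WithBot.coe_le_coe.2 (not_lt.1 fun hjk => ?_)
    simp only [Finset.mem_filter, Finset.mem_univ, true_and] at hk
    exact hmax k hjk hk.1 hk.2

lemma encode_eq_iff_prevOcc_eq : encode x i = encode y i ↔ prevOcc x i = prevOcc y i := by
  refine ⟨fun h => ?_, fun h => by unfold encode; rw [h]⟩
  unfold encode at h
  cases hx : prevOcc x i <;> cases hy : prevOcc y i <;> simp only [hx, hy] at h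
  case bot.bot => rfl
  case bot.coe k => have := (lt_and_eq_of_prevOcc_eq_coe hy).1; omega
  case coe.bot j => have := (lt_and_eq_of_prevOcc_eq_coe hx).1; omega
  case coe.coe j k =>
    have := (lt_and_eq_of_prevOcc_eq_coe hx).1
    have := (lt_and_eq_of_prevOcc_eq_coe hy).1
    rw [Fin.ext (by omega : (j : ℕ) = k)]

lemma encode_comp_of_injective {f : α → β} (hf : Function.Injective f) (x : Fin n → α) :
    encode (f ∘ x) = encode x :=
  funext fun i => encode_eq_iff_prevOcc_eq.2 (prevOcc_comp_of_injective hf x i)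

end PrevOcc

section AgreeOff

variable {α : Type*} [DecidableEq α] {n : ℕ} {z y : Fin n → α} {d i : Fin n}

lemma apply_eq_of_prevOcc_eq (hzy : ∀ j ≠ d, z j = y j) (h : prevOcc z d = prevOcc y d)
    (hz : prevOcc z d ≠ ⊥) : z d = y d := by
  obtain ⟨q, hq⟩ := WithBot.ne_bot_iff_exists.1 hz
  obtain ⟨hqd, hzq⟩ := lt_and_eq_of_prevOcc_eq_coe hq.symm
  have hyq := (lt_and_eq_of_prevOcc_eq_coe (h ▸ hq.symm)).2
  rw [← hzq, ← hyq, hzy q hqd.ne]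

lemma prevOcc_eq_of_forall_le_eq (h : ∀ k ≤ i, z k = y k) : prevOcc z i = prevOcc y i :=
  prevOcc_congr fun k hki => by rw [h k hki.le, h i le_rfl]

lemma prevOcc_ne_of_agree_off (hzy : ∀ j ≠ d, z j = y j) (hdi : d < i)
    (hzd : z d = z i) (hyd : y d ≠ y i) (hpy : prevOcc y i ≠ ⊥)
    (hne : prevOcc z i ≠ prevOcc y i) : prevOcc z d ≠ prevOcc y d := by
  have hzi : z i = y i := hzy i hdi.ne'
  obtain ⟨p, hp⟩ := WithBot.ne_bot_iff_exists.1 hpy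
  obtain ⟨hpi, hyp, hpmax⟩ := prevOcc_eq_coe_iff.1 hp.symm
  have hpd_ne : p ≠ d := by rintro rfl; exact hyd hyp
  have hzp : z p = z d := by rw [hzy p hpd_ne, hyp, ← hzi, hzd]
  -- otherwise `p` would also be the predecessor of `i` in `z`
  have hpd : p < d := by
    refine hpd_ne.lt_of_le (not_lt.1 fun hdp => hne ?_)
    rw [← hp, prevOcc_eq_coe_iff]
    refine ⟨hpi, hzp.trans hzd, fun k hpk hki => ?_⟩
    rw [hzy k (hdp.trans hpk).ne', hzi]
    exact hpmax k hpk hki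
  intro h
  have hz : prevOcc z d ≠ ⊥ := ((WithBot.bot_lt_coe p).trans_le (coe_le_prevOcc hpd hzp)).ne'
  exact hyd (by rw [← apply_eq_of_prevOcc_eq hzy h hz, hzd, hzi])

lemma prevOcc_eq_of_agree_off_of_lt (hzy : ∀ j ≠ d, z j = y j) (hdi : d < i)
    (hd : prevOcc z d = prevOcc y d) (hpz : prevOcc z i ≠ ⊥) (hpy : prevOcc y i ≠ ⊥) :
    prevOcc z i = prevOcc y i := by
  have hzi : z i = y i := hzy i hdi.ne'
  by_contra hne
  by_cases hiff : z d = z i ↔ y d = y i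
  · refine hne (prevOcc_congr fun k _ => ?_)
    rcases eq_or_ne k d with rfl | hkd
    · exact hiff
    · rw [hzy k hkd, hzi]
  · have hzy' : ∀ j ≠ d, y j = z j := fun j hj => (hzy j hj).symm
    by_cases hzd : z d = z i
    · exact prevOcc_ne_of_agree_off hzy hdi hzd (by tauto) hpy hne hd
    · exact prevOcc_ne_of_agree_off hzy' hdi (by tauto) hzd hpz (Ne.symm hne) hd.symm

lemma prevOcc_eq_of_agree_off_of_ne (hzy : ∀ j ≠ d, z j = y j) (hdi : d ≠ i)
    (hlt : ∀ j < i, encode z j = encode y j) (hpz : prevOcc z i ≠ ⊥) (hpy : prevOcc y i ≠ ⊥) :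
    prevOcc z i = prevOcc y i := by
  rcases hdi.lt_or_gt with hdi | hid
  · exact prevOcc_eq_of_agree_off_of_lt hzy hdi (encode_eq_iff_prevOcc_eq.1 (hlt d hdi)) hpz hpy
  · exact prevOcc_eq_of_forall_le_eq fun k hk => hzy k (hk.trans_lt hid).ne

end AgreeOff

theorem tol_one_iff_discard_first_mismatch_general {α : Type*} [DecidableEq α]
    (n : ℕ) (x y : Fin n → α) (i : Fin n)
    (hi : encode x i ≠ encode y i) (hleast : ∀ j : Fin n, j < i → encode x j = encode y j)
    (hpx : prevOcc x i ≠ ⊥) (hpy : prevOcc y i ≠ ⊥) :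
    (∃ D : Finset (Fin n), D.card ≤ 1 ∧ ∃ π : Equiv.Perm α, ∀ j ∉ D, π (x j) = y j) ↔
      ∃ π : Equiv.Perm α, ∀ j ∉ ({i} : Finset (Fin n)), π (x j) = y j := by
  refine ⟨fun ⟨D, hD, π, hπ⟩ => ⟨π, fun j hj => ?_⟩, fun h => ⟨{i}, by simp, h⟩⟩
  by_cases hjD : j ∈ D
  case neg => exact hπ j hjD
  have hagree : ∀ k ≠ j, (π ∘ x) k = y k := fun k hk =>
    hπ k fun hkD => hk (Finset.card_le_one.1 hD k hkD j hjD)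
  have henc : encode (π ∘ x) = encode x := encode_comp_of_injective π.injective x
  refine absurd ?_ hi
  rw [← henc, encode_eq_iff_prevOcc_eq]
  refine prevOcc_eq_of_agree_off_of_ne hagree (by simpa using hj) (fun k hk => ?_) ?_ hpy
  · rw [henc]; exact hleast k hk
  · rwa [prevOcc_comp_of_injective π.injective]

theorem tol_one_iff_discard_first_mismatch {α : Type*} [Fintype α] [DecidableEq α]
    (n : ℕ) (x y : Fin n → α) (hne : encode x ≠ encode y) (i : Fin n)
    (hi : encode x i ≠ encode y i) (hleast : ∀ j : Fin n, j < i → encode x j = encode y j)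
    (hpx : prevOcc x i ≠ ⊥) (hpy : prevOcc y i ≠ ⊥) :
    (∃ D : Finset (Fin n), D.card ≤ 1 ∧ ∃ π : Equiv.Perm α, ∀ j ∉ D, π (x j) = y j) ↔
      ∃ π : Equiv.Perm α, ∀ j ∉ ({i} : Finset (Fin n)), π (x j) = y j :=
  tol_one_iff_discard_first_mismatch_general n x y i hi hleast hpx hpy
end
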